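/- arXiv:2507.08904 — 2 statements merged into one kernel-verified Lean document; each statement's English description precedes it below -/
import Mathlib

section
/- Let Y₁ be noncentral chi-squared with 2 degrees of freedom and noncentrality λ₁ > 0, and let Y₂,...,Y_L be i.i.d. central chi-squared with 2 degrees of freedom, all independent. Then P(Y₁ > max{Y₂,...,Y_L}) is strictly increasing in λ₁. -/
/-!
Expanding `I₀` in its power series shows that `χ²₂(λ)` is the Poisson(`λ / 2`) mixture of the
central `χ²` laws with `2k + 2` degrees of freedom (densities `f_k`). Hence
`probBeatMax L λ = ∑ₖ aₖ e^{-λ/2} (λ/2)ᵏ / k!` with `aₖ = ∫ g f_k` and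
`g y = (1 - e^{-y/2})^{L-1}`. Since `y f_k(y) = 2(k+1) f_{k+1}(y)`, the difference
`a_{k+1} - a_k` is a multiple of `∫ (g y - g c)(y - c) f_k(y) dy` with `c = 2(k+1)`, which is
positive because `g` is strictly increasing. Finally
`d/dμ ∑ₖ aₖ e^{-μ} μᵏ / k! = ∑ₖ (a_{k+1} - aₖ) e^{-μ} μᵏ / k! > 0`.
-/

open MeasureTheory Real

/-- Modified Bessel function of the first kind of order 0 (real argument). -/
noncomputable def besselI0 (x : ℝ) : ℝ :=
  ∑' k : ℕ, (x / 2) ^ (2 * k) / ((Nat.factorial k : ℝ)) ^ 2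

/-- Density of the noncentral chi-squared distribution with 2 degrees of freedom
and noncentrality `lam`, for `y ≥ 0`. -/
noncomputable def ncChiSq2Pdf (lam y : ℝ) : ℝ :=
  (1 / 2) * Real.exp (-(y + lam) / 2) * besselI0 (Real.sqrt (y * lam))

/-- `P(Y₁ > max{Y₂,…,Y_L})` where `Y₁ ~ χ²₂(lam)` and `Y₂,…,Y_L` are i.i.d. central
χ²₂ (rate-1/2 exponentials), all independent; by conditioning on `Y₁` this equals
`∫₀^∞ (1 - e^{-y/2})^{L-1} f_{χ²₂(lam)}(y) dy`. -/
noncomputable def probBeatMax (L : ℕ) (lam : ℝ) : ℝ :=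
  ∫ y in Set.Ioi (0 : ℝ), (1 - Real.exp (-y / 2)) ^ (L - 1) * ncChiSq2Pdf lam y

open Set
open scoped Nat

/-- The density of the central χ² distribution with `2 * (k + 1)` degrees of freedom. -/
noncomputable def chiSqPdf (k : ℕ) (y : ℝ) : ℝ :=
  y ^ k * exp (-y / 2) / (2 ^ (k + 1) * k !)

lemma chiSqPdf_nonneg (k : ℕ) {y : ℝ} (hy : 0 ≤ y) : 0 ≤ chiSqPdf k y := by
  unfold chiSqPdf; positivity

lemma chiSqPdf_pos (k : ℕ) {y : ℝ} (hy : 0 < y) : 0 < chiSqPdf k y := by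
  unfold chiSqPdf; positivity

lemma mul_chiSqPdf (k : ℕ) (y : ℝ) :
    y * chiSqPdf k y = 2 * (k + 1) * chiSqPdf (k + 1) y := by
  simp only [chiSqPdf, Nat.factorial_succ]
  push_cast
  field_simp
  ring

lemma integral_pow_mul_exp_neg_half (k : ℕ) :
    ∫ y in Ioi (0 : ℝ), y ^ k * exp (-y / 2) = 2 ^ (k + 1) * k ! := by
  have h := integral_rpow_mul_exp_neg_mul_Ioi (a := k + 1) (r := 1 / 2)
    (by positivity) (by norm_num)
  simp only [add_sub_cancel_right, rpow_natCast, Gamma_nat_eq_factorial, one_div_one_div] at h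
  rw [← Nat.cast_add_one, rpow_natCast] at h
  rw [← h]
  refine setIntegral_congr_fun measurableSet_Ioi fun y _ => ?_
  ring_nf

lemma integral_chiSqPdf (k : ℕ) : ∫ y in Ioi (0 : ℝ), chiSqPdf k y = 1 := by
  simp only [chiSqPdf]
  rw [integral_div, integral_pow_mul_exp_neg_half, div_self (by positivity)]

lemma integrableOn_chiSqPdf (k : ℕ) : IntegrableOn (chiSqPdf k) (Ioi 0) :=
  .of_integral_ne_zero (by rw [integral_chiSqPdf]; exact one_ne_zero)

noncomputable def chiSqMean (g : ℝ → ℝ) (k : ℕ) : ℝ :=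
  ∫ y in Ioi (0 : ℝ), g y * chiSqPdf k y

section ChiSqMean

variable {g : ℝ → ℝ} {C : ℝ}

lemma integrableOn_mul_chiSqPdf (hg : AEStronglyMeasurable g (volume.restrict (Ioi 0)))
    (hC : ∀ y ∈ Ioi (0 : ℝ), ‖g y‖ ≤ C) (k : ℕ) :
    IntegrableOn (fun y => g y * chiSqPdf k y) (Ioi 0) :=
  (integrableOn_chiSqPdf k).bdd_mul hg ((ae_restrict_iff' measurableSet_Ioi).2 (.of_forall hC))

lemma integral_norm_mul_chiSqPdf_le (hC : ∀ y ∈ Ioi (0 : ℝ), ‖g y‖ ≤ C) (k : ℕ) :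
    ∫ y in Ioi (0 : ℝ), ‖g y * chiSqPdf k y‖ ≤ C :=
  calc ∫ y in Ioi (0 : ℝ), ‖g y * chiSqPdf k y‖
      ≤ ∫ y in Ioi (0 : ℝ), C * chiSqPdf k y := by
        refine integral_mono_of_nonneg (.of_forall fun _ => norm_nonneg _)
          ((integrableOn_chiSqPdf k).const_mul C) ?_
        refine (ae_restrict_iff' measurableSet_Ioi).2 (.of_forall fun y hy => ?_)
        dsimp only
        rw [norm_mul, Real.norm_of_nonneg (chiSqPdf_nonneg k (le_of_lt hy))]
        exact mul_le_mul_of_nonneg_right (hC y hy) (chiSqPdf_nonneg k (le_of_lt hy))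
    _ = C := by rw [integral_const_mul, integral_chiSqPdf, mul_one]

lemma norm_chiSqMean_le (hC : ∀ y ∈ Ioi (0 : ℝ), ‖g y‖ ≤ C) (k : ℕ) : ‖chiSqMean g k‖ ≤ C :=
  (norm_integral_le_integral_norm _).trans (integral_norm_mul_chiSqPdf_le hC k)

lemma integral_sub_mul_sub_mul_chiSqPdf_pos (hg : StrictMonoOn g (Ioi 0)) {c : ℝ} (hc : 0 < c)
    (k : ℕ) (hint : IntegrableOn (fun y => (g y - g c) * (y - c) * chiSqPdf k y) (Ioi 0)) :
    0 < ∫ y in Ioi (0 : ℝ), (g y - g c) * (y - c) * chiSqPdf k y := by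
  have hnonneg : ∀ y ∈ Ioi (0 : ℝ), 0 ≤ (g y - g c) * (y - c) * chiSqPdf k y := fun y hy => by
    refine mul_nonneg ?_ (chiSqPdf_nonneg k (le_of_lt hy))
    rcases le_total y c with hyc | hcy
    · exact mul_nonneg_of_nonpos_of_nonpos (sub_nonpos.2 (hg.monotoneOn hy hc hyc))
        (sub_nonpos.2 hyc)
    · exact mul_nonneg (sub_nonneg.2 (hg.monotoneOn hc hy hcy)) (sub_nonneg.2 hcy)
  rw [setIntegral_pos_iff_support_of_nonneg_ae
    ((ae_restrict_iff' measurableSet_Ioi).2 (.of_forall hnonneg)) hint]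
  refine (Measure.measure_Ioi_pos _ c).trans_le (measure_mono fun y (hy : c < y) => ?_)
  have hy0 : 0 < y := hc.trans hy
  exact ⟨(mul_pos (mul_pos (sub_pos.2 (hg hc hy0 hy)) (sub_pos.2 hy))
    (chiSqPdf_pos k hy0)).ne', hy0⟩

lemma chiSqMean_lt_succ (hg : StrictMonoOn g (Ioi 0)) (hC : ∀ y ∈ Ioi (0 : ℝ), ‖g y‖ ≤ C)
    (k : ℕ) : chiSqMean g k < chiSqMean g (k + 1) := by
  set c : ℝ := 2 * (k + 1)
  have hc : 0 < c := by positivity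
  have hint : ∀ n, IntegrableOn (fun y => g y * chiSqPdf n y) (Ioi 0) :=
    integrableOn_mul_chiSqPdf
      (aemeasurable_restrict_of_monotoneOn measurableSet_Ioi hg.monotoneOn).aestronglyMeasurable hC
  -- `c` is the mean of `chiSqPdf k`, so the `g c` term integrates to zero.
  have hsplit : ∀ y, (g y - g c) * (y - c) * chiSqPdf k y
      = c * (g y * chiSqPdf (k + 1) y - g y * chiSqPdf k y)
        - g c * c * (chiSqPdf (k + 1) y - chiSqPdf k y) := fun y => by
    linear_combination (g y - g c) * mul_chiSqPdf k y
  have hA : IntegrableOn (fun y => c * (g y * chiSqPdf (k + 1) y - g y * chiSqPdf k y)) (Ioi 0) :=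
    ((hint (k + 1)).sub (hint k)).const_mul c
  have hB : IntegrableOn (fun y => g c * c * (chiSqPdf (k + 1) y - chiSqPdf k y)) (Ioi 0) :=
    ((integrableOn_chiSqPdf (k + 1)).sub (integrableOn_chiSqPdf k)).const_mul (g c * c)
  have hpos := integral_sub_mul_sub_mul_chiSqPdf_pos hg hc k
    (IntegrableOn.congr_fun (hA.sub hB) (fun y _ => (hsplit y).symm) measurableSet_Ioi)
  rw [setIntegral_congr_fun measurableSet_Ioi fun y _ => hsplit y, integral_sub hA hB,
    integral_const_mul, integral_const_mul, integral_sub (hint _) (hint _),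
    integral_sub (integrableOn_chiSqPdf _) (integrableOn_chiSqPdf _), integral_chiSqPdf,
    integral_chiSqPdf, sub_self, mul_zero, sub_zero] at hpos
  have := pos_of_mul_pos_right hpos hc.le
  rw [chiSqMean, chiSqMean]
  linarith

end ChiSqMean

noncomputable def poissonWeight (μ : ℝ) (k : ℕ) : ℝ :=
  exp (-μ) * μ ^ k / k !

lemma poissonWeight_nonneg {μ : ℝ} (hμ : 0 ≤ μ) (k : ℕ) : 0 ≤ poissonWeight μ k := by
  unfold poissonWeight; positivity

lemma summable_poissonWeight (μ : ℝ) : Summable (poissonWeight μ) :=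
  ((Real.summable_pow_div_factorial μ).mul_left (exp (-μ))).congr fun k => by
    rw [poissonWeight, mul_div_assoc]

section PoissonMixture

variable {a : ℕ → ℝ} {C : ℝ}

lemma summable_mul_pow_div_factorial (ha : ∀ k, ‖a k‖ ≤ C) (x : ℝ) :
    Summable fun k => a k * x ^ k / k ! := by
  refine .of_norm_bounded ((Real.summable_pow_div_factorial |x|).mul_left C) fun k => ?_
  rw [norm_div, norm_mul, norm_pow, Real.norm_natCast, Real.norm_eq_abs, mul_div_assoc]
  exact mul_le_mul_of_nonneg_right (ha k) (by positivity)

lemma hasDerivAt_tsum_mul_pow_div_factorial (ha : ∀ k, ‖a k‖ ≤ C) (x : ℝ) :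
    HasDerivAt (fun x => ∑' k, a k * x ^ k / k !) (∑' k, a (k + 1) * x ^ k / k !) x := by
  have hshift : (fun x => ∑' k, a k * x ^ k / k !) =
      fun x => a 0 + ∑' k, a (k + 1) * x ^ (k + 1) / (k + 1)! := by
    funext x
    rw [(summable_mul_pow_div_factorial ha x).tsum_eq_zero_add]
    simp
  rw [hshift]
  refine HasDerivAt.const_add _ <| hasDerivAt_tsum_of_isPreconnected
    (g := fun k y => a (k + 1) * y ^ (k + 1) / (k + 1)!) (g' := fun k y => a (k + 1) * y ^ k / k !)
    (u := fun k => C * ((|x| + 1) ^ k / k !)) ((Real.summable_pow_div_factorial _).mul_left C)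
    Metric.isOpen_ball (convex_ball 0 (|x| + 1)).isPreconnected (fun k y _ => ?_)
    (fun k y hy => ?_) (y₀ := x) ?_ ?_ ?_
  · refine ((hasDerivAt_pow (k + 1) y).const_mul (a (k + 1))).div_const _ |>.congr_deriv ?_
    rw [Nat.factorial_succ]
    push_cast
    field_simp
  · rw [mem_ball_zero_iff] at hy
    rw [norm_div, norm_mul, norm_pow, Real.norm_natCast, mul_div_assoc]
    exact mul_le_mul (ha _) (by gcongr) (by positivity) ((norm_nonneg _).trans (ha 0))
  · simp
  · exact (summable_nat_add_iff 1).2 (summable_mul_pow_div_factorial ha x)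
  · simp

lemma strictMonoOn_tsum_mul_poissonWeight (ha : ∀ k, ‖a k‖ ≤ C) (ha_mono : StrictMono a) :
    StrictMonoOn (fun μ => ∑' k, a k * poissonWeight μ k) (Ici 0) := by
  have hF : (fun μ => ∑' k, a k * poissonWeight μ k) =
      fun μ => exp (-μ) * ∑' k, a k * μ ^ k / k ! := by
    funext μ
    rw [← tsum_mul_left]
    congr 1 with k
    unfold poissonWeight
    ring
  have hdiff_bdd : ∀ k, ‖a (k + 1) - a k‖ ≤ C + C := fun k =>
    (norm_sub_le _ _).trans (add_le_add (ha _) (ha _))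
  have hderiv : ∀ μ, HasDerivAt (fun μ => exp (-μ) * ∑' k, a k * μ ^ k / k !)
      (exp (-μ) * ∑' k, (a (k + 1) - a k) * μ ^ k / k !) μ := fun μ => by
    refine (hasDerivAt_neg μ).exp.fun_mul (hasDerivAt_tsum_mul_pow_div_factorial ha μ)
      |>.congr_deriv ?_
    simp_rw [sub_mul, sub_div]
    rw [Summable.tsum_sub (summable_mul_pow_div_factorial (fun k => ha (k + 1)) μ)
      (summable_mul_pow_div_factorial ha μ)]
    ring
  rw [hF]
  refine strictMonoOn_of_deriv_pos (convex_Ici 0)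
    (fun μ _ => (hderiv μ).continuousAt.continuousWithinAt) fun μ hμ => ?_
  rw [interior_Ici, mem_Ioi] at hμ
  rw [(hderiv μ).deriv]
  refine mul_pos (exp_pos _) <| (summable_mul_pow_div_factorial hdiff_bdd μ).tsum_pos
    (fun k => ?_) 0 (by simpa using ha_mono zero_lt_one)
  have := ha_mono k.lt_succ_self
  have : 0 ≤ a (k + 1) - a k := by linarith
  positivity

end PoissonMixture

lemma besselI0_sqrt {x : ℝ} (hx : 0 ≤ x) : besselI0 (√x) = ∑' k : ℕ, (x / 4) ^ k / (k !) ^ 2 := by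
  unfold besselI0
  congr with k
  rw [pow_mul, div_pow, sq_sqrt hx]
  norm_num

lemma ncChiSq2Pdf_eq_tsum {lam y : ℝ} (hlam : 0 ≤ lam) (hy : 0 ≤ y) :
    ncChiSq2Pdf lam y = ∑' k, poissonWeight (lam / 2) k * chiSqPdf k y := by
  rw [ncChiSq2Pdf, besselI0_sqrt (mul_nonneg hy hlam), ← tsum_mul_left]
  congr with k
  rw [poissonWeight, chiSqPdf, show -(y + lam) / 2 = -(lam / 2) + -y / 2 by ring, exp_add]
  simp only [div_pow, show (4 : ℝ) ^ k = 2 ^ k * 2 ^ k by rw [← mul_pow]; norm_num]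
  field_simp
  ring

lemma integral_mul_ncChiSq2Pdf {g : ℝ → ℝ} {C lam : ℝ}
    (hg : AEStronglyMeasurable g (volume.restrict (Ioi 0)))
    (hC : ∀ y ∈ Ioi (0 : ℝ), ‖g y‖ ≤ C) (hlam : 0 ≤ lam) :
    ∫ y in Ioi (0 : ℝ), g y * ncChiSq2Pdf lam y
      = ∑' k, chiSqMean g k * poissonWeight (lam / 2) k := by
  have hp := poissonWeight_nonneg (div_nonneg hlam zero_le_two)
  have hF_norm : ∀ k, ∫ y in Ioi (0 : ℝ), ‖poissonWeight (lam / 2) k * (g y * chiSqPdf k y)‖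
      ≤ C * poissonWeight (lam / 2) k := fun k => by
    simp_rw [norm_mul (poissonWeight _ _), Real.norm_of_nonneg (hp k)]
    rw [integral_const_mul, mul_comm]
    exact mul_le_mul_of_nonneg_right (integral_norm_mul_chiSqPdf_le hC k) (hp k)
  calc ∫ y in Ioi (0 : ℝ), g y * ncChiSq2Pdf lam y
      = ∫ y in Ioi (0 : ℝ), ∑' k, poissonWeight (lam / 2) k * (g y * chiSqPdf k y) :=
        setIntegral_congr_fun measurableSet_Ioi fun y hy => by
          rw [ncChiSq2Pdf_eq_tsum hlam (le_of_lt hy), ← tsum_mul_left]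
          congr with k
          ring
    _ = ∑' k, ∫ y in Ioi (0 : ℝ), poissonWeight (lam / 2) k * (g y * chiSqPdf k y) :=
        (integral_tsum_of_summable_integral_norm
          (fun k => (integrableOn_mul_chiSqPdf hg hC k).const_mul _)
          (.of_nonneg_of_le (fun k => integral_nonneg fun _ => norm_nonneg _) hF_norm
            ((summable_poissonWeight _).mul_left C))).symm
    _ = ∑' k, chiSqMean g k * poissonWeight (lam / 2) k := by
        congr with k
        rw [integral_const_mul, chiSqMean, mul_comm]

lemma strictMonoOn_one_sub_exp_neg_half_pow {n : ℕ} (hn : n ≠ 0) :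
    StrictMonoOn (fun y : ℝ => (1 - exp (-y / 2)) ^ n) (Ioi 0) :=
  (pow_left_strictMonoOn₀ hn).comp
    (fun _ _ _ _ hxy => sub_lt_sub_left (exp_lt_exp.2 (by linarith)) 1)
    fun y (hy : 0 < y) => sub_nonneg.2 (exp_le_one_iff.2 (by linarith))

lemma norm_one_sub_exp_neg_half_pow_le (n : ℕ) {y : ℝ} (hy : 0 ≤ y) :
    ‖(1 - exp (-y / 2)) ^ n‖ ≤ 1 := by
  have h₀ : 0 ≤ 1 - exp (-y / 2) := sub_nonneg.2 (exp_le_one_iff.2 (by linarith))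
  rw [norm_pow, Real.norm_of_nonneg h₀]
  exact pow_le_one₀ h₀ (sub_le_self _ (exp_nonneg _))

/-- The probability that a noncentral χ²₂(λ₁) variable exceeds the maximum of `L-1`
independent central χ²₂ variables is strictly increasing in the noncentrality `λ₁ > 0`. -/
theorem probBeatMax_strictMono (L : ℕ) (hL : 2 ≤ L) :
    StrictMonoOn (probBeatMax L) (Set.Ioi (0 : ℝ)) := by
  set g : ℝ → ℝ := fun y => (1 - exp (-y / 2)) ^ (L - 1)
  have hg_mono : StrictMonoOn g (Ioi 0) := strictMonoOn_one_sub_exp_neg_half_pow (by omega)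
  have hg_le : ∀ y ∈ Ioi (0 : ℝ), ‖g y‖ ≤ 1 := fun y hy =>
    norm_one_sub_exp_neg_half_pow_le _ (le_of_lt hy)
  have hrepr : ∀ lam ∈ Ioi (0 : ℝ),
      probBeatMax L lam = ∑' k, chiSqMean g k * poissonWeight (lam / 2) k := fun lam hlam =>
    integral_mul_ncChiSq2Pdf (Continuous.aestronglyMeasurable (by fun_prop)) hg_le (le_of_lt hlam)
  have hmix := strictMonoOn_tsum_mul_poissonWeight (norm_chiSqMean_le hg_le)
    (strictMono_nat_of_lt_succ (chiSqMean_lt_succ hg_mono hg_le))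
  intro x (hx : 0 < x) y (hy : 0 < y) hxy
  rw [hrepr x hx, hrepr y hy]
  exact hmix (mem_Ici.2 (by positivity)) (mem_Ici.2 (by positivity)) (by linarith)
end

section
/- Let Y₁ be noncentral chi-squared with 2 degrees of freedom and noncentrality λ₁ ≥ 0, and Y₂,...,Y_L i.i.d. central chi-squared with 2 DoF, independent of Y₁ and each other, L ≥ 2. Then P_a := P(Y₁ ≥ max{Y₂,...,Y_L}) = 1 - (L-1) Σ_{l=0}^{L-2} (-1)^l [C(L-2,l)/((l+1)(l+2))] exp(-λ₁(l+1)/(2(l+2))). -/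
open MeasureTheory Real Finset

/-- `P_a = P(Y₁ ≥ max{Y₂,…,Y_L})` where `Y₁ ~ χ²₂(λ₁)` and `Y₂,…,Y_L` are i.i.d.
central χ²₂, all independent; by conditioning on `Y₁` this equals
`∫₀^∞ (1 - e^{-y/2})^{L-1} f_{χ²₂(λ₁)}(y) dy`. -/
noncomputable def Pa (L : ℕ) (lam : ℝ) : ℝ :=
  ∫ y in Set.Ioi (0 : ℝ), (1 - Real.exp (-y / 2)) ^ (L - 1) * ncChiSq2Pdf lam y

/-! Expanding `(1 - e^{-y/2})^{L-1}` binomially reduces `P_a` to values of the Laplace transform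
of the `χ²₂(λ)` density at the points `a = k/2`. Integrating the Bessel series of the density
term by term against `e^{-ay}` gives Gamma integrals, and the resulting series resums to
`(1 + 2a)⁻¹ exp(-λa/(1 + 2a))`. The `k = 0` term is the `1`, and
`C(L-1, l+1)/(l+2) = (L-1) C(L-2, l)/((l+1)(l+2))` brings the others into the stated form. -/

open scoped Nat

theorem hasSum_besselI0 (x : ℝ) :
    HasSum (fun k : ℕ => (x / 2) ^ (2 * k) / (k ! : ℝ) ^ 2) (besselI0 x) := by
  refine Summable.hasSum (.of_nonneg_of_le (fun k => by rw [pow_mul]; positivity) (fun k => ?_)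
    (Real.summable_pow_div_factorial ((x / 2) ^ 2)))
  have hk : (1 : ℝ) ≤ k ! := by exact_mod_cast k.factorial_pos
  rw [pow_mul, sq (k ! : ℝ)]
  exact div_le_div_of_nonneg_left (by positivity) (by positivity)
    (le_mul_of_one_le_left (by positivity) hk)

theorem hasSum_exp_mul_ncChiSq2Pdf {lam y : ℝ} (hlam : 0 ≤ lam) (hy : 0 ≤ y) (a : ℝ) :
    HasSum (fun k : ℕ => exp (-lam / 2) / 2 * (lam / 4) ^ k / (k ! : ℝ) ^ 2
        * (y ^ k * exp (-((a + 1 / 2) * y))))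
      (exp (-(a * y)) * ncChiSq2Pdf lam y) := by
  have hexp : exp (-(a * y)) * exp (-(y + lam) / 2)
      = exp (-lam / 2) * exp (-((a + 1 / 2) * y)) := by
    rw [← exp_add, ← exp_add]; ring_nf
  have hsqrt (k : ℕ) : (√(y * lam) / 2) ^ (2 * k) = y ^ k * (lam / 4) ^ k := by
    rw [pow_mul, div_pow, sq_sqrt (mul_nonneg hy hlam), ← mul_pow]; ring_nf
  have h := (hasSum_besselI0 √(y * lam)).mul_left (exp (-(a * y)) * exp (-(y + lam) / 2) / 2)
  convert h using 1
  · rfl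
  · funext k
    rw [hexp, hsqrt]
    ring
  · unfold ncChiSq2Pdf
    ring

theorem integral_pow_mul_exp_neg_mul_Ioi (k : ℕ) {c : ℝ} (hc : 0 < c) :
    ∫ y in Set.Ioi (0 : ℝ), y ^ k * exp (-(c * y)) = k ! / c ^ (k + 1) := by
  have h := integral_rpow_mul_exp_neg_mul_Ioi (a := k + 1) (by positivity) hc
  simp only [add_sub_cancel_right, rpow_natCast, Gamma_nat_eq_factorial] at h
  rw [h, ← Nat.cast_add_one, rpow_natCast, one_div, inv_pow]
  ring

theorem integrableOn_pow_mul_exp_neg_mul_Ioi (k : ℕ) {c : ℝ} (hc : 0 < c) :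
    IntegrableOn (fun y : ℝ => y ^ k * exp (-(c * y))) (Set.Ioi 0) :=
  -- a non-integrable function has integral `0`
  .of_integral_ne_zero (by rw [integral_pow_mul_exp_neg_mul_Ioi k hc]; positivity)

theorem integral_tsum_of_nonneg {α ι : Type*} [MeasurableSpace α] {μ : Measure α} [Countable ι]
    {F : ι → α → ℝ} (hF_int : ∀ i, Integrable (F i) μ) (hF_nonneg : ∀ i, 0 ≤ᵐ[μ] F i)
    (hF_sum : Summable fun i => ∫ a, F i a ∂μ) :
    ∫ a, ∑' i, F i a ∂μ = ∑' i, ∫ a, F i a ∂μ := by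
  refine (integral_tsum_of_summable_integral_norm hF_int (hF_sum.congr fun i => ?_)).symm
  exact integral_congr_ae ((hF_nonneg i).mono fun a ha => (Real.norm_of_nonneg ha).symm)

theorem integral_exp_mul_ncChiSq2Pdf {lam a : ℝ} (hlam : 0 ≤ lam) (ha : 0 ≤ a) :
    ∫ y in Set.Ioi 0, exp (-(a * y)) * ncChiSq2Pdf lam y
      = 1 / (1 + 2 * a) * exp (-(lam * a / (1 + 2 * a))) := by
  set c := a + 1 / 2
  have hc : 0 < c := by positivity
  set F : ℕ → ℝ → ℝ := fun k y =>
    exp (-lam / 2) / 2 * (lam / 4) ^ k / (k ! : ℝ) ^ 2 * (y ^ k * exp (-(c * y)))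
  have hF_int (k : ℕ) : IntegrableOn (F k) (Set.Ioi 0) :=
    (integrableOn_pow_mul_exp_neg_mul_Ioi k hc).const_mul _
  have hF_nonneg (k : ℕ) : 0 ≤ᵐ[volume.restrict (Set.Ioi 0)] F k := by
    filter_upwards [ae_restrict_mem measurableSet_Ioi] with y (hy : 0 < y)
    positivity
  have hF_integral (k : ℕ) :
      ∫ y in Set.Ioi 0, F k y = exp (-lam / 2) / (2 * c) * ((lam / (4 * c)) ^ k / k !) := by
    rw [integral_const_mul, integral_pow_mul_exp_neg_mul_Ioi k hc, div_pow, div_pow,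
      mul_pow]
    field_simp
    ring
  have hF_sum : Summable fun k => ∫ y in Set.Ioi 0, F k y :=
    ((Real.summable_pow_div_factorial _).mul_left _).congr fun k => (hF_integral k).symm
  calc ∫ y in Set.Ioi 0, exp (-(a * y)) * ncChiSq2Pdf lam y
      = ∫ y in Set.Ioi 0, ∑' k, F k y := setIntegral_congr_fun measurableSet_Ioi fun y hy =>
        (hasSum_exp_mul_ncChiSq2Pdf hlam (le_of_lt hy) a).tsum_eq.symm
    _ = ∑' k, exp (-lam / 2) / (2 * c) * ((lam / (4 * c)) ^ k / k !) := by
        rw [integral_tsum_of_nonneg hF_int hF_nonneg hF_sum]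
        exact tsum_congr hF_integral
    _ = exp (-lam / 2) / (2 * c) * exp (lam / (4 * c)) := by
        rw [tsum_mul_left, exp_eq_exp_ℝ, NormedSpace.exp_eq_tsum_div]
    _ = 1 / (1 + 2 * a) * exp (-(lam * a / (1 + 2 * a))) := by
        have h2c : 2 * c = 1 + 2 * a := by ring
        rw [show 4 * c = 2 * (1 + 2 * a) by rw [← h2c]; ring, h2c, div_mul_eq_mul_div, ← exp_add,
          one_div_mul_eq_div]
        congr 2
        field_simp
        ring

theorem integrableOn_exp_mul_ncChiSq2Pdf {lam a : ℝ} (hlam : 0 ≤ lam) (ha : 0 ≤ a) :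
    IntegrableOn (fun y => exp (-(a * y)) * ncChiSq2Pdf lam y) (Set.Ioi 0) :=
  .of_integral_ne_zero (by rw [integral_exp_mul_ncChiSq2Pdf hlam ha]; positivity)

theorem Pa_succ_eq_sum (n : ℕ) {lam : ℝ} (hlam : 0 ≤ lam) :
    Pa (n + 1) lam = ∑ k ∈ range (n + 1),
      (-1 : ℝ) ^ k * n.choose k / (k + 1) * exp (-(lam * k / (2 * (k + 1)))) := by
  have hexpand (y : ℝ) : (1 - exp (-y / 2)) ^ n
      = ∑ k ∈ range (n + 1), (-1 : ℝ) ^ k * n.choose k * exp (-(k / 2 * y)) := by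
    rw [sub_eq_neg_add, add_pow]
    refine sum_congr rfl fun k _ => ?_
    rw [neg_pow, one_pow, ← exp_nat_mul]
    ring_nf
  have hlaplace (k : ℕ) : ∫ y in Set.Ioi 0, exp (-(k / 2 * y)) * ncChiSq2Pdf lam y
      = 1 / (k + 1) * exp (-(lam * k / (2 * (k + 1)))) := by
    rw [integral_exp_mul_ncChiSq2Pdf hlam (by positivity)]
    congr 2 <;> field_simp <;> ring
  unfold Pa
  simp_rw [Nat.add_sub_cancel, hexpand, sum_mul, mul_assoc]
  rw [integral_finsetSum _ fun k _ =>
    (integrableOn_exp_mul_ncChiSq2Pdf hlam (by positivity)).const_mul _ |>.const_mul _]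
  refine sum_congr rfl fun k _ => ?_
  rw [integral_const_mul, integral_const_mul, hlaplace]
  ring

theorem cast_choose_succ_succ_div (m l : ℕ) :
    ((m + 1).choose (l + 1) : ℝ) / (l + 2) = (m + 1) * (m.choose l / ((l + 1) * (l + 2))) := by
  have h : ((m + 1 : ℕ) : ℝ) * m.choose l = (m + 1).choose (l + 1) * ((l : ℝ) + 1) := by
    exact_mod_cast Nat.add_one_mul_choose_eq m l
  push_cast at h
  field_simp
  linear_combination -h

/-- Closed form of the successful beam alignment probability:
`P_a = 1 - (L-1) ∑_{l=0}^{L-2} (-1)^l [C(L-2,l)/((l+1)(l+2))] exp(-λ₁(l+1)/(2(l+2)))`. -/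
theorem Pa_closed_form (L : ℕ) (hL : 2 ≤ L) (lam1 : ℝ) (hlam : 0 ≤ lam1) :
    Pa L lam1
      = 1 - (L - 1 : ℝ) *
          ∑ l ∈ Finset.range (L - 1),
            (-1 : ℝ) ^ l * ((Nat.choose (L - 2) l : ℝ) / (((l : ℝ) + 1) * ((l : ℝ) + 2)))
              * Real.exp (-lam1 * ((l : ℝ) + 1) / (2 * ((l : ℝ) + 2))) := by
  obtain ⟨m, rfl⟩ : ∃ m, L = m + 2 := ⟨L - 2, by omega⟩
  rw [Pa_succ_eq_sum (m + 1) hlam, sum_range_succ', show m + 2 - 1 = m + 1 from rfl, mul_sum,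
    sub_eq_add_neg, ← sum_neg_distrib, add_comm]
  congr 1
  · simp
  refine sum_congr rfl fun l _ => ?_
  push_cast
  rw [mul_div_assoc, show (l : ℝ) + 1 + 1 = l + 2 by ring, cast_choose_succ_succ_div, neg_mul,
    neg_div]
  ring
end
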